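/- Under the hypotheses of the non-smooth recovery theorem, if additionally inf_w f(w) > -∞ (so that 0 ∈ dom f*), then ‖x̂¹ - x*‖ ≤ √6·(L/λ)·Z_f. -/

import Mathlib

open scoped RealInnerProductSpace
open Matrix MeasureTheory ProbabilityTheory

noncomputable section

abbrev EuclR (n : ℕ) := EuclideanSpace ℝ (Fin n)

def matVec {p q : ℕ} (M : Matrix (Fin p) (Fin q) ℝ) (x : EuclR q) : EuclR p :=
  Matrix.toEuclideanLin M x

def matCLM {p q : ℕ} (M : Matrix (Fin p) (Fin q) ℝ) : EuclR q →L[ℝ] EuclR p :=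
  LinearMap.toContinuousLinearMap (Matrix.toEuclideanLin M)

def ranM {p q : ℕ} (M : Matrix (Fin p) (Fin q) ℝ) : Submodule ℝ (EuclR p) :=
  LinearMap.range (Matrix.toEuclideanLin M)

def projOn {p : ℕ} (K : Submodule ℝ (EuclR p)) (x : EuclR p) : EuclR p :=
  (K.orthogonalProjection x : EuclR p)

def perpCLM {p : ℕ} (K : Submodule ℝ (EuclR p)) : EuclR p →L[ℝ] EuclR p :=
  ContinuousLinearMap.id ℝ (EuclR p) - K.subtypeL.comp (K.orthogonalProjection)

def fconj {p : ℕ} (f : EuclR p → ℝ) (z : EuclR p) : EReal :=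
  ⨆ w : EuclR p, ((⟪w, z⟫ - f w : ℝ) : EReal)

def fdom {p : ℕ} (f : EuclR p → ℝ) : Set (EuclR p) := {z | fconj f z ≠ ⊤}

def tcone {p : ℕ} (f : EuclR p → ℝ) (z : EuclR p) : Set (EuclR p) :=
  {Δ | ∃ t : ℝ, 0 ≤ t ∧ ∃ y ∈ fdom f, Δ = t • (y - z)}

def ZfVal {n d m : ℕ} (f : EuclR n → ℝ) (zs : EuclR n)
    (A : Matrix (Fin n) (Fin d) ℝ) (S : Matrix (Fin d) (Fin m) ℝ) : ℝ :=
  sSup ((fun Δ => ‖matVec Aᵀ Δ - projOn (ranM S) (matVec Aᵀ Δ)‖) ''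
    (tcone f zs ∩ Metric.closedBall 0 1))

/-!
Write `u = Aᵀ zs`, `v = Aᵀ (ys - zs)` and `P`, `P⊥` for the orthogonal projections onto the
range of `S` and onto its complement. As `f` is bounded below, `0` lies in the domain of `f*`, so
`f*` is finite at both dual solutions, and testing the optimality of `zs` and of `ys` along the
segment joining them gives two first-order conditions whose sum is `‖P v‖² ≤ ⟪P⊥ u, P⊥ v⟫`.
Lipschitz continuity of `f` confines the domain of `f*` to the ball of radius `L`, so `-zs` and
`ys - zs` are tangent directions at `zs` of norms at most `L` and `2 L`; hence, with
`Z = ZfVal f zs A S`, `‖P⊥ u‖ ≤ L Z`, `‖P⊥ v‖ ≤ 2 L Z`, and `‖v‖² = ‖P v‖² + ‖P⊥ v‖² ≤ 6 L² Z²`, while `x1 - xs = -(1 / lam) • v`.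
-/

open Filter Topology

theorem ConvexOn.sub_le_inner_of_isMinOn {E F : Type*} [AddCommGroup E] [Module ℝ E]
    [NormedAddCommGroup F] [InnerProductSpace ℝ F] {s : Set E} {g : E → ℝ}
    (hg : ConvexOn ℝ s g) (T : E →ₗ[ℝ] F) (c : ℝ) {a b : E} (ha : a ∈ s) (hb : b ∈ s)
    (hmin : IsMinOn (fun z => g z + c * ‖T z‖ ^ 2) s a) :
    g a - g b ≤ 2 * c * ⟪T a, T (b - a)⟫ := by
  set B := c * ‖T (b - a)‖ ^ 2
  have hstep : ∀ t ∈ Set.Ioc (0 : ℝ) 1, g a - g b ≤ 2 * c * ⟪T a, T (b - a)⟫ + t * B := by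
    rintro t ⟨ht0, ht1⟩
    have hconv := hg.2 ha hb (sub_nonneg.2 ht1) ht0.le (sub_add_cancel 1 t)
    have hmin_t := isMinOn_iff.1 hmin _
      (hg.1 ha hb (sub_nonneg.2 ht1) ht0.le (sub_add_cancel 1 t))
    have hT : T ((1 - t) • a + t • b) = T a + t • T (b - a) := by
      rw [map_add, map_smul, map_smul, map_sub]; module
    simp only [hT, norm_add_sq_real, inner_smul_right, norm_smul, smul_eq_mul,
      Real.norm_of_nonneg ht0.le] at hmin_t hconv
    nlinarith
  have hlim : Tendsto (fun t : ℝ => 2 * c * ⟪T a, T (b - a)⟫ + t * B) (𝓝[>] 0)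
      (𝓝 (2 * c * ⟪T a, T (b - a)⟫)) := by
    refine tendsto_nhdsWithin_of_tendsto_nhds (Continuous.tendsto' ?_ 0 _ ?_)
    · fun_prop
    · simp
  exact ge_of_tendsto hlim (eventually_of_mem (Ioc_mem_nhdsGT one_pos) hstep)

theorem ConvexOn.inner_starProjection_le_of_isMinOn {E F : Type*} [AddCommGroup E] [Module ℝ E]
    [NormedAddCommGroup F] [InnerProductSpace ℝ F] {s : Set E} {g : E → ℝ}
    (hg : ConvexOn ℝ s g) (T : E →ₗ[ℝ] F) (K : Submodule ℝ F) [K.HasOrthogonalProjection]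
    {c : ℝ} (hc : 0 < c) {a b : E} (ha : a ∈ s) (hb : b ∈ s)
    (hmina : IsMinOn (fun z => g z + c * ‖T z‖ ^ 2) s a)
    (hminb : IsMinOn (fun z => g z + c * ‖K.starProjection (T z)‖ ^ 2) s b) :
    ⟪K.starProjection (T b), K.starProjection (T (b - a))⟫ ≤ ⟪T a, T (b - a)⟫ := by
  have ha' := hg.sub_le_inner_of_isMinOn T c ha hb hmina
  have hb' := hg.sub_le_inner_of_isMinOn ((K.starProjection : F →ₗ[ℝ] F) ∘ₗ T) c hb ha hminb
  rw [← neg_sub b a, map_neg] at hb'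
  simp only [LinearMap.comp_apply, ContinuousLinearMap.coe_coe, inner_neg_right] at hb'
  nlinarith

theorem Submodule.norm_sq_le_of_inner_starProjection_le {E : Type*} [NormedAddCommGroup E]
    [InnerProductSpace ℝ E] (K : Submodule ℝ E) [K.HasOrthogonalProjection] {u v : E}
    (h : ⟪K.starProjection (u + v), K.starProjection v⟫ ≤ ⟪u, v⟫) :
    ‖v‖ ^ 2 ≤ ‖Kᗮ.starProjection u‖ * ‖Kᗮ.starProjection v‖ + ‖Kᗮ.starProjection v‖ ^ 2 := by
  set P := K.starProjection
  set Q := Kᗮ.starProjection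
  have hPQ (x y : E) : ⟪P x, Q y⟫ = 0 :=
    inner_right_of_mem_orthogonal (K.starProjection_apply_mem x) (Kᗮ.starProjection_apply_mem y)
  have hsplit : ⟪u, v⟫ = ⟪P u, P v⟫ + ⟪Q u, Q v⟫ := by
    calc ⟪u, v⟫ = ⟪P u + Q u, P v + Q v⟫ := by
          rw [K.starProjection_add_starProjection_orthogonal,
            K.starProjection_add_starProjection_orthogonal]
      _ = ⟪P u, P v⟫ + ⟪Q u, Q v⟫ := by
          rw [inner_add_left, inner_add_right, inner_add_right, hPQ,
            real_inner_comm (P v) (Q u), hPQ]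
          ring
  have hPv : ‖P v‖ ^ 2 ≤ ‖Q u‖ * ‖Q v‖ := by
    rw [map_add, inner_add_left, real_inner_self_eq_norm_sq, hsplit] at h
    linarith [real_inner_le_norm (Q u) (Q v)]
  linarith [K.norm_sq_eq_add_norm_sq_starProjection v]

theorem Submodule.norm_le_sqrt_six_mul_of_inner_starProjection_le {E : Type*}
    [NormedAddCommGroup E] [InnerProductSpace ℝ E] (K : Submodule ℝ E) [K.HasOrthogonalProjection]
    {u v : E} {M : ℝ} (h : ⟪K.starProjection (u + v), K.starProjection v⟫ ≤ ⟪u, v⟫)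
    (hu : ‖Kᗮ.starProjection u‖ ≤ M) (hv : ‖Kᗮ.starProjection v‖ ≤ 2 * M) :
    ‖v‖ ≤ √6 * M := by
  have hM : 0 ≤ M := by linarith [norm_nonneg (Kᗮ.starProjection u)]
  rw [← pow_le_pow_iff_left₀ (norm_nonneg _) (by positivity) two_ne_zero, mul_pow,
    Real.sq_sqrt (by norm_num)]
  nlinarith [K.norm_sq_le_of_inner_starProjection_le h,
    mul_le_mul hu hv (norm_nonneg _) hM, pow_le_pow_left₀ (norm_nonneg _) hv 2]

theorem ContinuousLinearMap.norm_apply_le_mul_sSup_image_inter_closedBall {E F : Type*}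
    [NormedAddCommGroup E] [NormedSpace ℝ E] [SeminormedAddCommGroup F] [NormedSpace ℝ F]
    (T : E →L[ℝ] F) {C : Set E} (hC : ∀ w ∈ C, ∀ r : ℝ, 0 ≤ r → r • w ∈ C) {w : E}
    (hw : w ∈ C) :
    ‖T w‖ ≤ ‖w‖ * sSup ((fun Δ => ‖T Δ‖) '' (C ∩ Metric.closedBall 0 1)) := by
  rcases eq_or_ne w 0 with rfl | hw0
  · simp
  have hbdd : BddAbove ((fun Δ => ‖T Δ‖) '' (C ∩ Metric.closedBall 0 1)) := by
    refine ⟨‖T‖, ?_⟩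
    rintro _ ⟨Δ, ⟨-, hΔ⟩, rfl⟩
    simpa using T.le_opNorm_of_le (mem_closedBall_zero_iff.1 hΔ)
  have hmem : ‖w‖⁻¹ • w ∈ C ∩ Metric.closedBall 0 1 :=
    ⟨hC w hw _ (by positivity), by simp [norm_smul, hw0]⟩
  have hle : ‖T (‖w‖⁻¹ • w)‖ ≤ _ := le_csSup hbdd ⟨_, hmem, rfl⟩
  rw [map_smul, norm_smul, norm_inv, norm_norm] at hle
  rwa [inv_mul_le_iff₀ (norm_pos_iff.2 hw0)] at hle

theorem ne_top_of_forall_add_coe_le {α : Type*} {g : α → EReal} (h : α → ℝ) {a : α}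
    (hmin : ∀ z, g a + h a ≤ g z + h z) {b : α} (hb : g b ≠ ⊤) : g a ≠ ⊤ :=
  (EReal.add_ne_top_iff_ne_top_left (EReal.coe_ne_bot _) (EReal.coe_ne_top _)).1 <|
    ne_top_of_le_ne_top (EReal.add_ne_top hb (EReal.coe_ne_top _)) (hmin b)

theorem isMinOn_toReal_add_of_forall_add_coe_le {α : Type*} {g : α → EReal} (h : α → ℝ)
    {a : α} (hmin : ∀ z, g a + h a ≤ g z + h z) (hbot : ∀ z, g z ≠ ⊥) (ha : g a ≠ ⊤) :
    IsMinOn (fun z => (g z).toReal + h z) {z | g z ≠ ⊤} a := by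
  refine isMinOn_iff.2 fun z hz => ?_
  have := hmin z
  rwa [← EReal.coe_toReal ha (hbot a), ← EReal.coe_toReal hz (hbot z), ← EReal.coe_add,
    ← EReal.coe_add, EReal.coe_le_coe_iff] at this

section Conjugate

variable {p : ℕ} (f : EuclR p → ℝ)

theorem inner_sub_le_fconj (w z : EuclR p) : ((⟪w, z⟫ - f w : ℝ) : EReal) ≤ fconj f z :=
  le_iSup (fun w => ((⟪w, z⟫ - f w : ℝ) : EReal)) w

theorem fconj_le_of_forall_le {z : EuclR p} {c : ℝ} (h : ∀ w, ⟪w, z⟫ - f w ≤ c) :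
    fconj f z ≤ c :=
  iSup_le fun w => EReal.coe_le_coe_iff.2 (h w)

theorem fconj_ne_bot (z : EuclR p) : fconj f z ≠ ⊥ :=
  ne_bot_of_le_ne_bot (EReal.coe_ne_bot _) (inner_sub_le_fconj f 0 z)

theorem inner_sub_le_toReal_fconj {z : EuclR p} (hz : z ∈ fdom f) (w : EuclR p) :
    ⟪w, z⟫ - f w ≤ (fconj f z).toReal := by
  have := inner_sub_le_fconj f w z
  rwa [← EReal.coe_toReal hz (fconj_ne_bot f z), EReal.coe_le_coe_iff] at this

theorem convexOn_toReal_fconj : ConvexOn ℝ (fdom f) (fun z => (fconj f z).toReal) := by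
  have hcomb : ∀ a ∈ fdom f, ∀ b ∈ fdom f, ∀ α β : ℝ, 0 ≤ α → 0 ≤ β → α + β = 1 →
      fconj f (α • a + β • b) ≤
        ((α * (fconj f a).toReal + β * (fconj f b).toReal : ℝ) : EReal) := by
    intro a ha b hb α β hα hβ hαβ
    refine fconj_le_of_forall_le f fun w => ?_
    have h₁ := mul_le_mul_of_nonneg_left (inner_sub_le_toReal_fconj f ha w) hα
    have h₂ := mul_le_mul_of_nonneg_left (inner_sub_le_toReal_fconj f hb w) hβ
    rw [inner_add_right, real_inner_smul_right, real_inner_smul_right]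
    linear_combination h₁ + h₂ + f w * hαβ
  refine ⟨fun a ha b hb α β hα hβ hαβ => ?_, fun a ha b hb α β hα hβ hαβ => ?_⟩
  · exact ne_top_of_le_ne_top (EReal.coe_ne_top _) (hcomb a ha b hb α β hα hβ hαβ)
  · have hne := ne_top_of_le_ne_top (EReal.coe_ne_top _) (hcomb a ha b hb α β hα hβ hαβ)
    rw [← EReal.coe_le_coe_iff, EReal.coe_toReal hne (fconj_ne_bot f _)]
    exact hcomb a ha b hb α β hα hβ hαβ

theorem zero_mem_fdom (hf : BddBelow (Set.range f)) : 0 ∈ fdom f := by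
  obtain ⟨B, hB⟩ := hf
  refine ne_top_of_le_ne_top (EReal.coe_ne_top (-B)) (fconj_le_of_forall_le f fun w => ?_)
  rw [inner_zero_right]
  linarith [hB ⟨w, rfl⟩]

theorem norm_le_of_mem_fdom {L : ℝ} (hL : 0 ≤ L) (hLip : ∀ x y, |f x - f y| ≤ L * ‖x - y‖)
    {z : EuclR p} (hz : z ∈ fdom f) : ‖z‖ ≤ L := by
  by_contra! hlt
  -- along the ray `t • z` the objective defining `fconj f z` grows like `t * ‖z‖ * (‖z‖ - L)`
  set c := (fconj f z).toReal
  have hray : ∀ t : ℝ, 0 ≤ t → t * (‖z‖ * (‖z‖ - L)) ≤ c + f 0 := by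
    intro t ht
    have h₁ := inner_sub_le_toReal_fconj f hz (t • z)
    have h₂ := hLip (t • z) 0
    rw [real_inner_smul_left, real_inner_self_eq_norm_sq] at h₁
    rw [sub_zero, norm_smul, Real.norm_of_nonneg ht] at h₂
    nlinarith [le_abs_self (f (t • z) - f 0)]
  have hpos : 0 < ‖z‖ * (‖z‖ - L) := mul_pos (by linarith) (by linarith)
  have := hray ((|c + f 0| + 1) / (‖z‖ * (‖z‖ - L))) (by positivity)
  rw [div_mul_cancel₀ _ hpos.ne'] at this
  linarith [le_abs_self (c + f 0)]

theorem smul_mem_tcone {z w : EuclR p} (hw : w ∈ tcone f z) {r : ℝ} (hr : 0 ≤ r) :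
    r • w ∈ tcone f z := by
  obtain ⟨t, ht, y, hy, rfl⟩ := hw
  exact ⟨r * t, mul_nonneg hr ht, y, hy, smul_smul r t _⟩

theorem sub_mem_tcone {y : EuclR p} (hy : y ∈ fdom f) (z : EuclR p) : y - z ∈ tcone f z :=
  ⟨1, zero_le_one, y, hy, (one_smul ℝ _).symm⟩

end Conjugate

theorem norm_starProjection_orthogonal_le_mul_ZfVal {n d m : ℕ} {f : EuclR n → ℝ} {zs : EuclR n}
    (A : Matrix (Fin n) (Fin d) ℝ) (S : Matrix (Fin d) (Fin m) ℝ) {w : EuclR n}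
    (hw : w ∈ tcone f zs) {r : ℝ} (hr : ‖w‖ ≤ r) :
    ‖(ranM S)ᗮ.starProjection (toEuclideanLin Aᵀ w)‖ ≤ r * ZfVal f zs A S := by
  have hZ : ZfVal f zs A S = sSup ((fun Δ => ‖((ranM S)ᗮ.starProjection ∘L matCLM Aᵀ) Δ‖) ''
      (tcone f zs ∩ Metric.closedBall 0 1)) := by
    simp only [ZfVal, ContinuousLinearMap.comp_apply, Submodule.starProjection_orthogonal_val]
    rfl
  have hZ0 : 0 ≤ ZfVal f zs A S := Real.sSup_nonneg (by rintro _ ⟨Δ, -, rfl⟩; positivity)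
  refine le_trans ?_ (mul_le_mul_of_nonneg_right hr hZ0)
  rw [hZ]
  exact ((ranM S)ᗮ.starProjection ∘L matCLM Aᵀ).norm_apply_le_mul_sSup_image_inter_closedBall
    (fun _ => smul_mem_tcone f) hw

theorem nonsmooth_recovery_bddBelow_general (n d m : ℕ) (f : EuclR n → ℝ)
    (L lam : ℝ) (hL : 0 ≤ L) (hlam : 0 < lam)
    (hLip : ∀ x y, |f x - f y| ≤ L * ‖x - y‖)
    (hbdd : BddBelow (Set.range f))
    (A : Matrix (Fin n) (Fin d) ℝ) (S : Matrix (Fin d) (Fin m) ℝ)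
    (zs ys : EuclR n)
    (hzs : ∀ z, fconj f zs + ((1 / (2 * lam) * ‖matVec Aᵀ zs‖ ^ 2 : ℝ) : EReal)
        ≤ fconj f z + ((1 / (2 * lam) * ‖matVec Aᵀ z‖ ^ 2 : ℝ) : EReal))
    (hys : ∀ y, fconj f ys + ((1 / (2 * lam) * ‖projOn (ranM S) (matVec Aᵀ ys)‖ ^ 2 : ℝ) : EReal)
        ≤ fconj f y + ((1 / (2 * lam) * ‖projOn (ranM S) (matVec Aᵀ y)‖ ^ 2 : ℝ) : EReal))
    (xs x1 : EuclR d)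
    (hxs : xs = (-(1 / lam)) • matVec Aᵀ zs)
    (hx1 : x1 = (-(1 / lam)) • matVec Aᵀ ys) :
    ‖x1 - xs‖ ≤ Real.sqrt 6 * (L / lam) * ZfVal f zs A S := by
  have h0 : 0 ∈ fdom f := zero_mem_fdom f hbdd
  let q : EuclR n → ℝ := fun z => 1 / (2 * lam) * ‖matVec Aᵀ z‖ ^ 2
  let qS : EuclR n → ℝ := fun z => 1 / (2 * lam) * ‖projOn (ranM S) (matVec Aᵀ z)‖ ^ 2
  have hz : zs ∈ fdom f := ne_top_of_forall_add_coe_le q hzs h0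
  have hy : ys ∈ fdom f := ne_top_of_forall_add_coe_le qS hys h0
  have hopt := (convexOn_toReal_fconj f).inner_starProjection_le_of_isMinOn
    (toEuclideanLin Aᵀ) (ranM S) (by positivity : 0 < 1 / (2 * lam)) hz hy
    (isMinOn_toReal_add_of_forall_add_coe_le q hzs (fconj_ne_bot f) hz)
    (isMinOn_toReal_add_of_forall_add_coe_le qS hys (fconj_ne_bot f) hy)
  rw [← add_sub_cancel (toEuclideanLin Aᵀ zs) (toEuclideanLin Aᵀ ys), ← map_sub] at hopt
  have hzL := norm_le_of_mem_fdom f hL hLip hz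
  have hyL := norm_le_of_mem_fdom f hL hLip hy
  have hu := norm_starProjection_orthogonal_le_mul_ZfVal A S (sub_mem_tcone f h0 zs)
    (r := L) (by simpa using hzL)
  rw [zero_sub, map_neg, map_neg, norm_neg] at hu
  have hv := norm_starProjection_orthogonal_le_mul_ZfVal A S (sub_mem_tcone f hy zs)
    (r := 2 * L) ((norm_sub_le ys zs).trans (by linarith))
  rw [mul_assoc] at hv
  calc ‖x1 - xs‖ = 1 / lam * ‖toEuclideanLin Aᵀ (ys - zs)‖ := by
        rw [hx1, hxs, ← smul_sub, norm_smul, norm_neg, Real.norm_of_nonneg (by positivity),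
          map_sub]
        rfl
    _ ≤ 1 / lam * (√6 * (L * ZfVal f zs A S)) := by
        gcongr
        exact (ranM S).norm_le_sqrt_six_mul_of_inner_starProjection_le hopt hu hv
    _ = √6 * (L / lam) * ZfVal f zs A S := by ring

/-- improved non-smooth recovery bound when f is bounded below. -/
theorem nonsmooth_recovery_bddBelow (n d m : ℕ) (f : EuclR n → ℝ)
    (hconv : ConvexOn ℝ Set.univ f) (L lam : ℝ) (hL : 0 ≤ L) (hlam : 0 < lam)
    (hLip : ∀ x y, |f x - f y| ≤ L * ‖x - y‖)
    (hbdd : BddBelow (Set.range f))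
    (A : Matrix (Fin n) (Fin d) ℝ) (S : Matrix (Fin d) (Fin m) ℝ)
    (zs ys : EuclR n)
    (hzs : ∀ z, fconj f zs + ((1 / (2 * lam) * ‖matVec Aᵀ zs‖ ^ 2 : ℝ) : EReal)
        ≤ fconj f z + ((1 / (2 * lam) * ‖matVec Aᵀ z‖ ^ 2 : ℝ) : EReal))
    (hys : ∀ y, fconj f ys + ((1 / (2 * lam) * ‖projOn (ranM S) (matVec Aᵀ ys)‖ ^ 2 : ℝ) : EReal)
        ≤ fconj f y + ((1 / (2 * lam) * ‖projOn (ranM S) (matVec Aᵀ y)‖ ^ 2 : ℝ) : EReal))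
    (xs x1 : EuclR d)
    (hxs : xs = (-(1 / lam)) • matVec Aᵀ zs)
    (hx1 : x1 = (-(1 / lam)) • matVec Aᵀ ys) :
    ‖x1 - xs‖ ≤ Real.sqrt 6 * (L / lam) * ZfVal f zs A S :=
  nonsmooth_recovery_bddBelow_general n d m f L lam hL hlam hLip hbdd A S zs ys hzs hys xs x1 hxs
    hx1
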